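/- Let r and m be even positive integers, let f₁, f₂ be bent functions on 𝔽₂^r and let g₁, g₂ be bent functions on 𝔽₂^m. Then 𝔣 : 𝔽₂^r × 𝔽₂^m × 𝔽₂^4 → 𝔽₂ defined by 𝔣(x, y, z₁, z₂, z₃, z₄) = f₂(x) ⊕ g₂(y) ⊕ z₁(g₁(y) ⊕ g₂(y) ⊕ z₂)(f₁(x) ⊕ f₂(x)) ⊕ z₁z₄(g₁(y) ⊕ g₂(y)) ⊕ z₂z₄ ⊕ z₁z₃ is a bent function on 𝔽₂^{r+m+4}. -/
import Mathlib


open Finset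

def dotp {ι : Type*} [Fintype ι] (a b : ι → ZMod 2) : ZMod 2 := ∑ i, a i * b i

def WHT {ι : Type*} [Fintype ι] [DecidableEq ι]
    (f : (ι → ZMod 2) → ZMod 2) (ω : ι → ZMod 2) : ℤ :=
  ∑ x : ι → ZMod 2, (-1 : ℤ) ^ ((f x + dotp ω x).val)

def IsBent {ι : Type*} [Fintype ι] [DecidableEq ι] (f : (ι → ZMod 2) → ZMod 2) : Prop :=
  ∀ ω, |WHT f ω| = 2 ^ (Fintype.card ι / 2)

def IsDualBent {ι : Type*} [Fintype ι] [DecidableEq ι] (f g : (ι → ZMod 2) → ZMod 2) : Prop :=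
  ∀ ω, WHT f ω = 2 ^ (Fintype.card ι / 2) * (-1 : ℤ) ^ ((g ω).val)

def IsPlateaued {ι : Type*} [Fintype ι] [DecidableEq ι] (s : ℕ) (f : (ι → ZMod 2) → ZMod 2) : Prop :=
  ∀ ω, WHT f ω = 0 ∨ WHT f ω = 2 ^ ((Fintype.card ι + s) / 2) ∨
    WHT f ω = -(2 ^ ((Fintype.card ι + s) / 2))

def WSupport {ι : Type*} [Fintype ι] [DecidableEq ι] (f : (ι → ZMod 2) → ZMod 2) : Set (ι → ZMod 2) :=
  {ω | WHT f ω ≠ 0}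

def chi (v : ZMod 2) : ℤ := if v = 0 then 1 else -1

lemma chi_add (a b : ZMod 2) : chi (a + b) = chi a * chi b := by revert a b; decide

lemma neg_one_pow_val (v : ZMod 2) : (-1 : ℤ) ^ v.val = chi v := by revert v; decide

lemma abs_chi (v : ZMod 2) : |chi v| = 1 := by revert v; decide

lemma two_cases (v : ZMod 2) : v = 0 ∨ v = 1 := by revert v; decide

lemma zsum (A G : ZMod 2) (c : Fin 4 → ZMod 2) :
    ∑ z : Fin 4 → ZMod 2,
      chi (z 0 * (G + z 1) * A + z 0 * z 3 * G + z 1 * z 3 + z 0 * z 2 + dotp c z)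
    = 4 * chi (c 0 * c 2 + c 1 * c 3 + c 2 * c 3 * A + c 1 * c 2 * G) := by
  revert A G c; decide

lemma WHT_chi {ι : Type*} [Fintype ι] [DecidableEq ι]
    (f : (ι → ZMod 2) → ZMod 2) (ω : ι → ZMod 2) :
    WHT f ω = ∑ x : ι → ZMod 2, chi (f x + dotp ω x) := by
  unfold WHT; simp only [neg_one_pow_val]

lemma dotp_elim {ι κ : Type*} [Fintype ι] [Fintype κ]
    (ω : ι ⊕ κ → ZMod 2) (u : ι → ZMod 2) (v : κ → ZMod 2) :
    dotp ω (Sum.elim u v)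
      = dotp (fun i => ω (Sum.inl i)) u + dotp (fun j => ω (Sum.inr j)) v := by
  unfold dotp; rw [Fintype.sum_sum_type]; rfl

def splitE (ι κ μ : Type*) :
    ((ι → ZMod 2) × (κ → ZMod 2) × (μ → ZMod 2)) ≃ ((ι ⊕ (κ ⊕ μ)) → ZMod 2) where
  toFun p := Sum.elim p.1 (Sum.elim p.2.1 p.2.2)
  invFun x := (fun i => x (Sum.inl i), fun j => x (Sum.inr (Sum.inl j)),
    fun k => x (Sum.inr (Sum.inr k)))
  left_inv p := rfl
  right_inv x := by funext i; rcases i with i | j | k <;> rfl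

lemma sum_twist {ι : Type*} [Fintype ι] [DecidableEq ι]
    (f₁ f₂ : (ι → ZMod 2) → ZMod 2) (h₁ : IsBent f₁) (h₂ : IsBent f₂)
    (t : ZMod 2) (a : ι → ZMod 2) :
    |∑ u : ι → ZMod 2, chi (f₂ u + dotp a u + t * (f₁ u + f₂ u))|
      = 2 ^ (Fintype.card ι / 2) := by
  rcases two_cases t with rfl | rfl
  · have e : ∀ u, f₂ u + dotp a u + (0 : ZMod 2) * (f₁ u + f₂ u) = f₂ u + dotp a u := by
      intro u; ring
    simp only [e]
    rw [← WHT_chi]; exact h₂ a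
  · have e : ∀ u, f₂ u + dotp a u + (1 : ZMod 2) * (f₁ u + f₂ u) = f₁ u + dotp a u := by
      intro u
      have h : ∀ p q d : ZMod 2, p + d + 1 * (q + p) = q + d := by decide
      apply h
    simp only [e]
    rw [← WHT_chi]; exact h₁ a

/-- Generalized indirect sum C: for bent `f₁,f₂` on `𝔽₂^r` and
`g₁,g₂` on `𝔽₂^m` (`r`, `m` even), the function
`𝔣(x,y,z₁,…,z₄) = f₂(x) ⊕ g₂(y) ⊕ z₁(g₁(y)⊕g₂(y)⊕z₂)(f₁⊕f₂)(x)
⊕ z₁z₄(g₁⊕g₂)(y) ⊕ z₂z₄ ⊕ z₁z₃` is bent on `𝔽₂^(r+m+4)`. -/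
theorem stmt12 {r m : ℕ} (hr : 0 < r) (hm : 0 < m) (hre : Even r) (hme : Even m)
    (f₁ f₂ : (Fin r → ZMod 2) → ZMod 2) (hf₁ : IsBent f₁) (hf₂ : IsBent f₂)
    (g₁ g₂ : (Fin m → ZMod 2) → ZMod 2) (hg₁ : IsBent g₁) (hg₂ : IsBent g₂) :
    IsBent (fun x : (Fin r ⊕ (Fin m ⊕ Fin 4)) → ZMod 2 =>
      f₂ (fun i => x (Sum.inl i)) + g₂ (fun i => x (Sum.inr (Sum.inl i))) +
      x (Sum.inr (Sum.inr 0)) *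
        (g₁ (fun i => x (Sum.inr (Sum.inl i))) + g₂ (fun i => x (Sum.inr (Sum.inl i))) +
          x (Sum.inr (Sum.inr 1))) *
        (f₁ (fun i => x (Sum.inl i)) + f₂ (fun i => x (Sum.inl i))) +
      x (Sum.inr (Sum.inr 0)) * x (Sum.inr (Sum.inr 3)) *
        (g₁ (fun i => x (Sum.inr (Sum.inl i))) + g₂ (fun i => x (Sum.inr (Sum.inl i)))) +
      x (Sum.inr (Sum.inr 1)) * x (Sum.inr (Sum.inr 3)) +
      x (Sum.inr (Sum.inr 0)) * x (Sum.inr (Sum.inr 2))) := by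
  intro ω
  set F : ((Fin r ⊕ (Fin m ⊕ Fin 4)) → ZMod 2) → ZMod 2 := fun x =>
      f₂ (fun i => x (Sum.inl i)) + g₂ (fun i => x (Sum.inr (Sum.inl i))) +
      x (Sum.inr (Sum.inr 0)) *
        (g₁ (fun i => x (Sum.inr (Sum.inl i))) + g₂ (fun i => x (Sum.inr (Sum.inl i))) +
          x (Sum.inr (Sum.inr 1))) *
        (f₁ (fun i => x (Sum.inl i)) + f₂ (fun i => x (Sum.inl i))) +
      x (Sum.inr (Sum.inr 0)) * x (Sum.inr (Sum.inr 3)) *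
        (g₁ (fun i => x (Sum.inr (Sum.inl i))) + g₂ (fun i => x (Sum.inr (Sum.inl i)))) +
      x (Sum.inr (Sum.inr 1)) * x (Sum.inr (Sum.inr 3)) +
      x (Sum.inr (Sum.inr 0)) * x (Sum.inr (Sum.inr 2)) with hF
  set a : Fin r → ZMod 2 := fun i => ω (Sum.inl i) with ha
  set b : Fin m → ZMod 2 := fun j => ω (Sum.inr (Sum.inl j)) with hb
  set c : Fin 4 → ZMod 2 := fun k => ω (Sum.inr (Sum.inr k)) with hc
  -- the inner z-part
  set Z : (Fin m → ZMod 2) → (Fin r → ZMod 2) → (Fin 4 → ZMod 2) → ZMod 2 :=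
    fun y u z => z 0 * ((g₁ y + g₂ y) + z 1) * (f₁ u + f₂ u) + z 0 * z 3 * (g₁ y + g₂ y)
      + z 1 * z 3 + z 0 * z 2 + dotp c z with hZ
  -- Step 1: reindex the sum and split the argument
  have h1 : WHT F ω = ∑ u : Fin r → ZMod 2, ∑ y : Fin m → ZMod 2, ∑ z : Fin 4 → ZMod 2,
      chi (((f₂ u + dotp a u) + (g₂ y + dotp b y)) + Z y u z) := by
    rw [WHT_chi]
    rw [← Fintype.sum_equiv (splitE (Fin r) (Fin m) (Fin 4))
      (fun p => chi (F (Sum.elim p.1 (Sum.elim p.2.1 p.2.2)) +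
        dotp ω (Sum.elim p.1 (Sum.elim p.2.1 p.2.2))))
      (fun x => chi (F x + dotp ω x)) (fun p => rfl)]
    rw [Fintype.sum_prod_type]
    refine Finset.sum_congr rfl fun u _ => ?_
    rw [Fintype.sum_prod_type]
    refine Finset.sum_congr rfl fun y _ => Finset.sum_congr rfl fun z _ => ?_
    congr 1
    have hd : dotp ω (Sum.elim u (Sum.elim y z)) = dotp a u + (dotp b y + dotp c z) := by
      rw [dotp_elim, dotp_elim]
    rw [hF, hd, hZ]
    show f₂ u + g₂ y + z 0 * (g₁ y + g₂ y + z 1) * (f₁ u + f₂ u)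
        + z 0 * z 3 * (g₁ y + g₂ y) + z 1 * z 3 + z 0 * z 2
        + (dotp a u + (dotp b y + dotp c z)) = _
    ring
  -- Step 2: evaluate the inner z-sum and factor
  have h4 : WHT F ω =
      (∑ u : Fin r → ZMod 2, chi (f₂ u + dotp a u + c 2 * c 3 * (f₁ u + f₂ u))) *
      ((∑ y : Fin m → ZMod 2, chi (g₂ y + dotp b y + c 1 * c 2 * (g₁ y + g₂ y))) *
        (4 * chi (c 0 * c 2 + c 1 * c 3))) := by
    rw [h1]
    rw [Finset.sum_mul]
    refine Finset.sum_congr rfl fun u _ => ?_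
    rw [Finset.sum_mul, Finset.mul_sum]
    refine Finset.sum_congr rfl fun y _ => ?_
    have step : ∑ z : Fin 4 → ZMod 2, chi (((f₂ u + dotp a u) + (g₂ y + dotp b y)) + Z y u z)
        = chi ((f₂ u + dotp a u) + (g₂ y + dotp b y)) *
          (4 * chi (c 0 * c 2 + c 1 * c 3 + c 2 * c 3 * (f₁ u + f₂ u)
            + c 1 * c 2 * (g₁ y + g₂ y))) := by
      calc ∑ z : Fin 4 → ZMod 2, chi (((f₂ u + dotp a u) + (g₂ y + dotp b y)) + Z y u z)
          = ∑ z : Fin 4 → ZMod 2,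
              chi ((f₂ u + dotp a u) + (g₂ y + dotp b y)) * chi (Z y u z) :=
            Finset.sum_congr rfl fun z _ => chi_add _ _
        _ = chi ((f₂ u + dotp a u) + (g₂ y + dotp b y)) *
              ∑ z : Fin 4 → ZMod 2, chi (Z y u z) := by rw [← Finset.mul_sum]
        _ = _ := by
            congr 1
            simp only [hZ]
            exact zsum (f₁ u + f₂ u) (g₁ y + g₂ y) c
    rw [step]
    simp only [chi_add]
    ring
  rw [h4, abs_mul, abs_mul, abs_mul, abs_chi]
  rw [sum_twist f₁ f₂ hf₁ hf₂ (c 2 * c 3) a, sum_twist g₁ g₂ hg₁ hg₂ (c 1 * c 2) b]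
  obtain ⟨r', rfl⟩ := hre
  obtain ⟨m', rfl⟩ := hme
  have hcard : Fintype.card (Fin (r' + r') ⊕ (Fin (m' + m') ⊕ Fin 4))
      = r' + r' + (m' + m' + 4) := by simp
  rw [hcard]
  have e1 : (r' + r') / 2 = r' := by omega
  have e2 : (m' + m') / 2 = m' := by omega
  have e3 : (r' + r' + (m' + m' + 4)) / 2 = r' + m' + 2 := by omega
  rw [Fintype.card_fin, Fintype.card_fin, e1, e2, e3]
  rw [abs_of_nonneg (by norm_num : (0:ℤ) ≤ 4)]
  ring
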